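/- Let H be a complex Hilbert space, T_1 ≥ T_2 ≥ ⋯ a decreasing sequence of positive linear contractions on H, T the strong operator limit of (T_n), and P the orthogonal projection onto {ξ ∈ H : Tξ = ξ}. Define H_𝒮 := ⋂_{σ proper} H_σ, where H_σ := {ξ ∈ H : ‖T_{σ(n)} ⋯ T_{σ(1)} ξ − P ξ‖ → 0}. Then H_𝒮 is a closed linear subspace of H which is invariant under T_m for every m ∈ ℕ, i.e., T_m(H_𝒮) ⊆ H_𝒮. -/

import Mathlib

/-!
Every `T n` is symmetric, and a vector fixed by `Tlim` is fixed by every `T n`: the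
decreasing sequence `⟪T n η, η⟫` stays above its limit `‖η‖²`, which forces `T n η = η` for a
contraction. Hence `T m ξ - ξ` is orthogonal to the fixed space, so `P (T m ξ) = P ξ`, and
prepending `m` to a proper sequence turns convergence for `ξ` into convergence for `T m ξ`.
Linearity and closedness hold for each `H_σ` separately: the products `T_{σ n} ⋯ T_{σ 0}` are
contractions, hence equicontinuous, and the set where an equicontinuous family converges to a
continuous limit is closed.
-/

open Filter Topology
open scoped InnerProductSpace ComplexOrder

/-- `prodSeq T σ n = T (σ n) ∘ ⋯ ∘ T (σ 0)`. -/
noncomputable def prodSeq {H : Type*} [NormedAddCommGroup H] [InnerProductSpace ℂ H]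
    (T : ℕ → H →L[ℂ] H) (σ : ℕ → ℕ) : ℕ → H →L[ℂ] H
  | 0 => T (σ 0)
  | (n + 1) => (T (σ (n + 1))).comp (prodSeq T σ n)

def tendstoSubmodule {ι 𝕜 E F : Type*} [Semiring 𝕜] [TopologicalSpace E] [AddCommMonoid E]
    [Module 𝕜 E] [TopologicalSpace F] [AddCommMonoid F] [Module 𝕜 F] [ContinuousAdd F]
    [ContinuousConstSMul 𝕜 F] (l : Filter ι) (A : ι → E →L[𝕜] F) (B : E →L[𝕜] F) :
    Submodule 𝕜 E where
  carrier := {x | Tendsto (A · x) l (𝓝 (B x))}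
  add_mem' {x y} hx hy := by simpa only [Set.mem_ofPred_eq, map_add] using hx.add hy
  zero_mem' := by simpa only [Set.mem_ofPred_eq, map_zero] using tendsto_const_nhds
  smul_mem' c x hx := by simpa only [Set.mem_ofPred_eq, map_smul] using hx.const_smul c

theorem isClosed_tendstoSubmodule {ι 𝕜 E F : Type*} [NontriviallyNormedField 𝕜]
    [SeminormedAddCommGroup E] [NormedSpace 𝕜 E] [SeminormedAddCommGroup F] [NormedSpace 𝕜 F]
    {l : Filter ι} {A : ι → E →L[𝕜] F} (B : E →L[𝕜] F) {C : ℝ} (hA : ∀ i, ‖A i‖ ≤ C) :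
    IsClosed (tendstoSubmodule l A B : Set E) :=
  have hequi : Equicontinuous ((↑) ∘ A) :=
    ((NormedSpace.equicontinuous_TFAE A).out 5 1).mp (⟨C, hA⟩ : ∃ C, ∀ i, ‖A i‖ ≤ C)
  hequi.isClosed_setOfPred_tendsto B.continuous

section Contraction

variable {𝕜 E : Type*} [RCLike 𝕜] [NormedAddCommGroup E] [InnerProductSpace 𝕜 E]

theorem eq_of_norm_le_of_norm_sq_le_re_inner {v w : E} (hv : ‖v‖ ≤ ‖w‖)
    (h : ‖w‖ ^ 2 ≤ RCLike.re ⟪v, w⟫_𝕜) : v = w := by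
  have hsq : ‖v - w‖ ^ 2 = ‖v‖ ^ 2 - 2 * RCLike.re ⟪v, w⟫_𝕜 + ‖w‖ ^ 2 := norm_sub_sq v w
  have : ‖v - w‖ ^ 2 ≤ 0 := by nlinarith [norm_nonneg v]
  exact sub_eq_zero.mp <| norm_eq_zero.mp <| pow_eq_zero_iff two_ne_zero |>.mp <|
    le_antisymm this (sq_nonneg _)

theorem apply_eq_self_of_antitone_of_tendsto {A : ℕ → E →L[𝕜] E} {B : E →L[𝕜] E}
    (hA : ∀ n, ‖A n‖ ≤ 1) {η : E} (hanti : Antitone fun n => RCLike.re ⟪A n η, η⟫_𝕜)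
    (hlim : Tendsto (fun n => A n η) atTop (𝓝 (B η))) (hη : B η = η) (n : ℕ) : A n η = η := by
  have hle : RCLike.re ⟪B η, η⟫_𝕜 ≤ RCLike.re ⟪A n η, η⟫_𝕜 :=
    hanti.le_of_tendsto ((RCLike.continuous_re.tendsto _).comp (hlim.inner tendsto_const_nhds)) n
  rw [hη, inner_self_eq_norm_sq] at hle
  exact eq_of_norm_le_of_norm_sq_le_re_inner
    (((A n).le_of_opNorm_le (hA n) η).trans_eq (one_mul _)) hle

theorem apply_eq_of_inner_sub_eq_zero {S P : E →ₗ[𝕜] E} (hPmem : ∀ ξ, S (P ξ) = P ξ)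
    (hPorth : ∀ ξ η, S η = η → ⟪ξ - P ξ, η⟫_𝕜 = 0) {ξ ξ' : E}
    (h : ∀ η, S η = η → ⟪ξ' - ξ, η⟫_𝕜 = 0) : P ξ' = P ξ := by
  set d := P ξ' - P ξ
  have hd : S d = d := by simp only [d, map_sub, hPmem]
  have hdd : ⟪d, d⟫_𝕜 = ⟪ξ' - ξ, d⟫_𝕜 - ⟪ξ' - P ξ', d⟫_𝕜 + ⟪ξ - P ξ, d⟫_𝕜 := by
    rw [← inner_sub_left, ← inner_add_left]
    congr 1
    simp only [d]
    abel
  rw [h d hd, hPorth _ _ hd, hPorth _ _ hd, sub_zero, add_zero, inner_self_eq_zero] at hdd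
  exact sub_eq_zero.mp hdd

end Contraction

theorem LinearMap.isSymmetric_of_inner_nonneg {E : Type*} [NormedAddCommGroup E]
    [InnerProductSpace ℂ E] {A : E →ₗ[ℂ] E} (hA : ∀ x, 0 ≤ ⟪A x, x⟫_ℂ) : A.IsSymmetric :=
  ((LinearMap.isPositive_iff_complex A).mpr fun x =>
    ⟨(Complex.eq_re_of_ofReal_le (hA x)).symm, (Complex.nonneg_iff.mp (hA x)).1⟩).isSymmetric

theorem finite_preimage_cons {σ : ℕ → ℕ} {k : ℕ} (hσ : (σ ⁻¹' {k}).Finite) (m : ℕ) :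
    ((Stream'.cons m σ : ℕ → ℕ) ⁻¹' {k}).Finite := by
  refine ((hσ.image Nat.succ).insert 0).subset ?_
  rintro (_ | n) hn
  · exact Set.mem_insert _ _
  · exact Set.mem_insert_of_mem _ ⟨n, hn, rfl⟩

theorem prodSeq_cons_succ {H : Type*} [NormedAddCommGroup H] [InnerProductSpace ℂ H]
    (T : ℕ → H →L[ℂ] H) (σ : ℕ → ℕ) (m n : ℕ) :
    prodSeq T (Stream'.cons m σ) (n + 1) = (prodSeq T σ n).comp (T m) := by
  induction n with
  | zero => rfl
  | succ n ih => exact congrArg (T (σ (n + 1))).comp ih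

theorem norm_prodSeq_le_one {H : Type*} [NormedAddCommGroup H] [InnerProductSpace ℂ H]
    {T : ℕ → H →L[ℂ] H} (hT : ∀ n, ‖T n‖ ≤ 1) (σ : ℕ → ℕ) (n : ℕ) : ‖prodSeq T σ n‖ ≤ 1 := by
  induction n with
  | zero => exact hT _
  | succ n ih =>
    exact (ContinuousLinearMap.opNorm_comp_le _ _).trans (mul_le_one₀ (hT _) (norm_nonneg _) ih)

theorem generalized_paszkiewicz_subspace_invariant_general
    {H : Type*} [NormedAddCommGroup H] [InnerProductSpace ℂ H]
    (T : ℕ → H →L[ℂ] H)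
    (hpos : ∀ n, ∀ ξ : H, 0 ≤ ⟪(T n) ξ, ξ⟫_ℂ)
    (hcontr : ∀ n, ‖T n‖ ≤ 1)
    (hdec : ∀ n, ∀ ξ : H, ⟪(T (n + 1)) ξ, ξ⟫_ℂ ≤ ⟪(T n) ξ, ξ⟫_ℂ)
    (Tlim : H →L[ℂ] H)
    (hTlim : ∀ ξ : H, Tendsto (fun n => (T n) ξ) atTop (𝓝 (Tlim ξ)))
    (P : H →L[ℂ] H)
    (hPmem : ∀ ξ : H, Tlim (P ξ) = P ξ)
    (hPorth : ∀ ξ η : H, Tlim η = η → ⟪ξ - P ξ, η⟫_ℂ = 0)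
    (HS : Set H)
    (hHS : HS = {ξ : H | ∀ σ : ℕ → ℕ, (∀ k, (σ ⁻¹' {k}).Finite) →
      Tendsto (fun n => prodSeq T σ n ξ) atTop (𝓝 (P ξ))}) :
    (∃ K : Submodule ℂ H, (K : Set H) = HS) ∧
    IsClosed HS ∧
    (∀ m : ℕ, ∀ ξ ∈ HS, T m ξ ∈ HS) := by
  have hfix (η : H) (hη : Tlim η = η) (n : ℕ) : T n η = η :=
    apply_eq_self_of_antitone_of_tendsto hcontr
      (antitone_nat_of_succ_le fun n => (Complex.le_def.mp (hdec n η)).1) (hTlim η) hη n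
  have hPT (m : ℕ) (ξ : H) : P (T m ξ) = P ξ := by
    refine apply_eq_of_inner_sub_eq_zero (S := (Tlim : H →ₗ[ℂ] H)) (P := (P : H →ₗ[ℂ] H))
      hPmem hPorth fun η hη => ?_
    have hsym : ⟪T m ξ, η⟫_ℂ = ⟪ξ, T m η⟫_ℂ :=
      (T m : H →ₗ[ℂ] H).isSymmetric_of_inner_nonneg (hpos m) ξ η
    rw [inner_sub_left, hsym, hfix η hη, sub_self]
  have hHS' : HS = ⋂ (σ : ℕ → ℕ) (_ : ∀ k, (σ ⁻¹' {k}).Finite),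
      (tendstoSubmodule atTop (prodSeq T σ) P : Set H) := by
    rw [hHS]; ext ξ; simp only [Set.mem_iInter]; rfl
  refine ⟨⟨⨅ (σ : ℕ → ℕ) (_ : ∀ k, (σ ⁻¹' {k}).Finite), tendstoSubmodule atTop (prodSeq T σ) P,
    by simp only [hHS', Submodule.coe_iInf]⟩, ?_, ?_⟩
  · rw [hHS']
    exact isClosed_biInter fun σ _ => isClosed_tendstoSubmodule P (norm_prodSeq_le_one hcontr σ)
  · intro m ξ hξ
    rw [hHS] at hξ ⊢
    intro σ hσ
    have := (hξ _ fun k => finite_preimage_cons (hσ k) m).comp (tendsto_add_atTop_nat 1)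
    simpa only [Function.comp_def, prodSeq_cons_succ, ContinuousLinearMap.comp_apply, hPT]
      using this

/-- The generalized Paszkiewicz set `H_𝒮 = ⋂_{σ proper} H_σ` is a closed linear subspace of
`H` which is invariant under every `T m`. -/
theorem generalized_paszkiewicz_subspace_invariant
    {H : Type*} [NormedAddCommGroup H] [InnerProductSpace ℂ H] [CompleteSpace H]
    (T : ℕ → H →L[ℂ] H)
    (hpos : ∀ n, ∀ ξ : H, 0 ≤ ⟪(T n) ξ, ξ⟫_ℂ)
    (hcontr : ∀ n, ‖T n‖ ≤ 1)
    (hdec : ∀ n, ∀ ξ : H, ⟪(T (n + 1)) ξ, ξ⟫_ℂ ≤ ⟪(T n) ξ, ξ⟫_ℂ)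
    (Tlim : H →L[ℂ] H)
    (hTlim : ∀ ξ : H, Tendsto (fun n => (T n) ξ) atTop (𝓝 (Tlim ξ)))
    (P : H →L[ℂ] H)
    (hPmem : ∀ ξ : H, Tlim (P ξ) = P ξ)
    (hPorth : ∀ ξ η : H, Tlim η = η → ⟪ξ - P ξ, η⟫_ℂ = 0)
    (HS : Set H)
    (hHS : HS = {ξ : H | ∀ σ : ℕ → ℕ, (∀ k, (σ ⁻¹' {k}).Finite) →
      Tendsto (fun n => prodSeq T σ n ξ) atTop (𝓝 (P ξ))}) :
    (∃ K : Submodule ℂ H, (K : Set H) = HS) ∧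
    IsClosed HS ∧
    (∀ m : ℕ, ∀ ξ ∈ HS, T m ξ ∈ HS) :=
  generalized_paszkiewicz_subspace_invariant_general T hpos hcontr hdec Tlim hTlim P hPmem hPorth HS
    hHS
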